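/- Let d ∈ ℕ, k ∈ {1,…,d}, n ∈ ℕ, and let f : {−1,+1}^d → {−1,+1} be monotone. Let X₁, …, X_n be independent random vectors, each uniformly distributed on {−1,+1}^d. Define ĥ(α) = (1/n) Σ_{i=1}^n X_i^α f(X_i) for α ∈ {0,1}^d (with x^α = ∏_{j=1}^d x_j^{α_j}), set h(x) = Σ_{α ∈ {0,1}^d, |α|₁ ≤ k} ĥ(α) x^α, and let g = sgn ∘ h, where sgn(t) = +1 if t ≥ 0 and −1 if t < 0. Then 𝔼[ 2^{−d} · #{x ∈ {−1,+1}^d : f(x) ≠ g(x)} ] ≤ √d/(k+1) + (Σ_{l=0}^k C(d,l))/n, and hence ≤ √d/(k+1) + exp(k(1 + log(d/k)))/n. -/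
import Mathlib

noncomputable def chi (d : ℕ) (α x : Fin d → Bool) : ℝ :=
  ∏ j, if α j then (if x j then (1 : ℝ) else -1) else 1

noncomputable def msign (t : ℝ) : ℝ := if 0 ≤ t then 1 else -1

open scoped Classical in
noncomputable def booleanMCError (d k n : ℕ) (f : (Fin d → Bool) → ℝ) : ℝ :=
  (∑ ω : Fin n → Fin d → Bool,
      ((Finset.univ.filter fun x : Fin d → Bool =>
          f x ≠ msign (∑ α ∈ Finset.univ.filter
              (fun α : Fin d → Bool =>
                (Finset.univ.filter fun j => α j = true).card ≤ k),
            (∑ i, chi d α (ω i) * f (ω i)) / n * chi d α x)).card : ℝ) / 2 ^ d) /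
    2 ^ (d * n)

open Finset

noncomputable def sgnB (b : Bool) : ℝ := if b then 1 else -1

lemma chi_def (d : ℕ) (α x : Fin d → Bool) :
    chi d α x = ∏ j, if α j then sgnB (x j) else 1 := rfl

lemma chi_mul_self (d : ℕ) (α x : Fin d → Bool) : chi d α x * chi d α x = 1 := by
  rw [chi_def, ← Finset.prod_mul_distrib]
  apply Finset.prod_eq_one
  intro j _
  by_cases h : α j <;> simp [h, sgnB] <;> cases x j <;> norm_num

lemma sum_pi_prod {n : ℕ} {E : Type*} [Fintype E] (g : Fin n → E → ℝ) :
    ∑ ω : Fin n → E, ∏ j, g j (ω j) = ∏ j, ∑ z, g j z :=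
  (Fintype.prod_sum g).symm

lemma sum_chi_mul_chi (d : ℕ) (α β : Fin d → Bool) :
    ∑ x : Fin d → Bool, chi d α x * chi d β x = if α = β then (2:ℝ)^d else 0 := by
  have h : ∀ x : Fin d → Bool, chi d α x * chi d β x
      = ∏ j, ((if α j then sgnB (x j) else 1) * (if β j then sgnB (x j) else 1)) := by
    intro x; rw [chi_def, chi_def, Finset.prod_mul_distrib]
  simp_rw [h]
  rw [sum_pi_prod (g := fun j b => (if α j then sgnB b else 1) * (if β j then sgnB b else 1))]
  have h2 : ∀ j, (∑ z : Bool, (if α j then sgnB z else 1) * (if β j then sgnB z else 1))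
      = if α j = β j then 2 else 0 := by
    intro j
    cases hα : α j <;> cases hβ : β j <;> simp [sgnB] <;> norm_num
  simp_rw [h2]
  by_cases hab : α = β
  · subst hab; simp
  · rw [if_neg hab]
    obtain ⟨j, hj⟩ := Function.ne_iff.mp hab
    exact Finset.prod_eq_zero (Finset.mem_univ j) (by simp [hj])

lemma sum_chi_mul_chi' (d : ℕ) (x y : Fin d → Bool) :
    ∑ α : Fin d → Bool, chi d α x * chi d α y = if x = y then (2:ℝ)^d else 0 := by
  have h : ∀ α : Fin d → Bool, chi d α x * chi d α y
      = ∏ j, (if α j then sgnB (x j) * sgnB (y j) else 1) := by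
    intro α; rw [chi_def, chi_def, ← Finset.prod_mul_distrib]
    apply Finset.prod_congr rfl; intro j _; by_cases h : α j <;> simp [h]
  simp_rw [h]
  rw [sum_pi_prod (g := fun j a => if a = true then sgnB (x j) * sgnB (y j) else 1)]
  have h2 : ∀ j, (∑ a : Bool, if a = true then sgnB (x j) * sgnB (y j) else 1)
      = if x j = y j then 2 else 0 := by
    intro j
    cases hx : x j <;> cases hy : y j <;> simp [sgnB] <;> norm_num
  simp_rw [h2]
  by_cases hab : x = y
  · subst hab; simp
  · rw [if_neg hab]
    obtain ⟨j, hj⟩ := Function.ne_iff.mp hab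
    exact Finset.prod_eq_zero (Finset.mem_univ j) (by simp [hj])

noncomputable def fhat (d : ℕ) (f : (Fin d → Bool) → ℝ) (α : Fin d → Bool) : ℝ :=
  (∑ x, chi d α x * f x) / 2 ^ d

lemma parseval_bilin (d : ℕ) (a b : (Fin d → Bool) → ℝ) :
    ∑ x : Fin d → Bool, (∑ α, a α * chi d α x) * (∑ β, b β * chi d β x)
      = 2 ^ d * ∑ α, a α * b α := by
  have h : ∀ x : Fin d → Bool, (∑ α, a α * chi d α x) * (∑ β, b β * chi d β x)
      = ∑ α, ∑ β, a α * b β * (chi d α x * chi d β x) := by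
    intro x
    rw [Finset.sum_mul_sum]
    exact Finset.sum_congr rfl fun α _ => Finset.sum_congr rfl fun β _ => by ring
  simp_rw [h]
  rw [Finset.sum_comm]
  have h2 : ∀ α : Fin d → Bool, (∑ x : Fin d → Bool, ∑ β, a α * b β * (chi d α x * chi d β x))
      = 2 ^ d * (a α * b α) := by
    intro α
    rw [Finset.sum_comm]
    have h3 : ∀ β : Fin d → Bool, (∑ x : Fin d → Bool, a α * b β * (chi d α x * chi d β x))
        = a α * b β * (if α = β then (2:ℝ)^d else 0) := by
      intro β; rw [← Finset.mul_sum, sum_chi_mul_chi]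
    simp_rw [h3, mul_ite, mul_zero]
    rw [Finset.sum_ite_eq Finset.univ α (fun β => a α * b β * (2:ℝ)^d)]
    simp only [Finset.mem_univ, if_true]; ring
  simp_rw [h2, ← Finset.mul_sum]

lemma inversion (d : ℕ) (f : (Fin d → Bool) → ℝ) (x : Fin d → Bool) :
    ∑ α, fhat d f α * chi d α x = f x := by
  unfold fhat
  have h : ∀ α : Fin d → Bool, (∑ y, chi d α y * f y) / 2 ^ d * chi d α x
      = (∑ y, chi d α y * f y * chi d α x) / 2 ^ d := by
    intro α; rw [div_mul_eq_mul_div, Finset.sum_mul]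
  simp_rw [h, ← Finset.sum_div]
  rw [Finset.sum_comm]
  have h2 : ∀ y : Fin d → Bool, (∑ α : Fin d → Bool, chi d α y * f y * chi d α x)
      = f y * (if y = x then (2:ℝ)^d else 0) := by
    intro y
    have : ∀ α : Fin d → Bool, chi d α y * f y * chi d α x = f y * (chi d α y * chi d α x) := by
      intro α; ring
    simp_rw [this, ← Finset.mul_sum, sum_chi_mul_chi']
  simp_rw [h2, mul_ite, mul_zero]
  rw [Finset.sum_ite_eq' Finset.univ x (fun y => f y * (2:ℝ)^d)]
  simp only [Finset.mem_univ, if_true]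
  field_simp

lemma prod_two_point {n : ℕ} (i i' : Fin n) (hne : i ≠ i') (A B C : ℝ) :
    ∏ j : Fin n, (if j = i then A else if j = i' then B else C) = A * B * C ^ (n-2) := by
  rw [← Finset.mul_prod_erase Finset.univ _ (Finset.mem_univ i), if_pos rfl]
  have hi' : i' ∈ Finset.univ.erase i := Finset.mem_erase.mpr ⟨hne.symm, Finset.mem_univ i'⟩
  rw [← Finset.mul_prod_erase _ _ hi', if_neg (Ne.symm hne), if_pos rfl]
  have hc : ∏ j ∈ (Finset.univ.erase i).erase i',
      (if j = i then A else if j = i' then B else C)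
      = ∏ _j ∈ (Finset.univ.erase i).erase i', C := by
    refine Finset.prod_congr rfl fun j hj => ?_
    have h1 : j ≠ i' := Finset.ne_of_mem_erase hj
    have h2 : j ≠ i := Finset.ne_of_mem_erase (Finset.mem_of_mem_erase hj)
    rw [if_neg h2, if_neg h1]
  rw [hc, Finset.prod_const, Finset.card_erase_of_mem hi',
    Finset.card_erase_of_mem (Finset.mem_univ i), Finset.card_univ, Fintype.card_fin]
  have : n - 1 - 1 = n - 2 := by omega
  rw [this]; ring

lemma prod_one_point {n : ℕ} (i : Fin n) (A C : ℝ) :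
    ∏ j : Fin n, (if j = i then A else C) = A * C ^ (n-1) := by
  rw [← Finset.mul_prod_erase Finset.univ _ (Finset.mem_univ i), if_pos rfl]
  have hc : ∏ j ∈ Finset.univ.erase i, (if j = i then A else C)
      = ∏ _j ∈ Finset.univ.erase i, C :=
    Finset.prod_congr rfl fun j hj => if_neg (Finset.ne_of_mem_erase hj)
  rw [hc, Finset.prod_const, Finset.card_erase_of_mem (Finset.mem_univ i), Finset.card_univ,
    Fintype.card_fin]

lemma sum_eval_single {n : ℕ} {E : Type*} [Fintype E] (i : Fin n) (F : E → ℝ) :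
    ∑ ω : Fin n → E, F (ω i) = (∑ z, F z) * (Fintype.card E : ℝ)^(n-1) := by
  have h : ∀ ω : Fin n → E, F (ω i) = ∏ j, (if j = i then F (ω j) else 1) := by
    intro ω
    rw [Finset.prod_ite_eq' Finset.univ i (fun j => F (ω j))]
    simp
  simp_rw [h]
  rw [sum_pi_prod (g := fun j z => if j = i then F z else 1)]
  have hsum : ∀ j : Fin n, (∑ z : E, if j = i then F z else 1)
      = if j = i then ∑ z, F z else (Fintype.card E : ℝ) := by
    intro j; split <;> simp
  simp_rw [hsum]
  exact prod_one_point i _ _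

lemma sum_eval_pair {n : ℕ} {E : Type*} [Fintype E] (i i' : Fin n) (hne : i ≠ i')
    (F G : E → ℝ) :
    ∑ ω : Fin n → E, F (ω i) * G (ω i')
      = (∑ z, F z) * (∑ z, G z) * (Fintype.card E : ℝ)^(n-2) := by
  have h : ∀ ω : Fin n → E, F (ω i) * G (ω i')
      = ∏ j, (if j = i then F (ω j) else if j = i' then G (ω j) else 1) := by
    intro ω
    rw [← Finset.mul_prod_erase Finset.univ _ (Finset.mem_univ i), if_pos rfl]
    have hi' : i' ∈ Finset.univ.erase i := Finset.mem_erase.mpr ⟨hne.symm, Finset.mem_univ i'⟩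
    rw [← Finset.mul_prod_erase _ _ hi', if_neg (Ne.symm hne), if_pos rfl]
    have hc : ∏ j ∈ (Finset.univ.erase i).erase i',
        (if j = i then F (ω j) else if j = i' then G (ω j) else 1)
        = ∏ _j ∈ (Finset.univ.erase i).erase i', (1:ℝ) := by
      refine Finset.prod_congr rfl fun j hj => ?_
      have h1 : j ≠ i' := Finset.ne_of_mem_erase hj
      have h2 : j ≠ i := Finset.ne_of_mem_erase (Finset.mem_of_mem_erase hj)
      rw [if_neg h2, if_neg h1]
    rw [hc, Finset.prod_const, one_pow, mul_one]
  simp_rw [h]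
  rw [sum_pi_prod (g := fun j z => if j = i then F z else if j = i' then G z else 1)]
  have hsum : ∀ j : Fin n, (∑ z : E, if j = i then F z else if j = i' then G z else 1)
      = if j = i then ∑ z, F z else if j = i' then ∑ z, G z else (Fintype.card E : ℝ) := by
    intro j; split
    · simp
    · split <;> simp
  simp_rw [hsum]
  exact prod_two_point i i' hne _ _ _

lemma sample_var (d n : ℕ) (hn : 1 ≤ n) (Y : (Fin d → Bool) → ℝ) (hY : ∀ z, Y z * Y z = 1) :
    ∑ ω : Fin n → Fin d → Bool,
      ((∑ z, Y z) / 2 ^ d - (∑ i, Y (ω i)) / n) ^ 2 ≤ (2:ℝ) ^ (d * n) / (n:ℝ) := by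
  have hcard : (Fintype.card (Fin d → Bool) : ℝ) = 2 ^ d := by
    simp [Fintype.card_fun]
  set μ : ℝ := (∑ z, Y z) / 2 ^ d with hμ
  set T : (Fin d → Bool) → ℝ := fun z => Y z - μ with hT
  have hsY : ∑ z, Y z = 2 ^ d * μ := by
    rw [hμ]; field_simp
  have hT0 : ∑ z, T z = 0 := by
    rw [hT]
    simp only [Finset.sum_sub_distrib, Finset.sum_const, Finset.card_univ, nsmul_eq_mul, hcard]
    rw [hsY]; ring
  have hT2 : ∑ z, T z * T z ≤ 2 ^ d := by
    have : ∀ z, T z * T z = Y z * Y z - 2 * μ * Y z + μ * μ := by intro z; rw [hT]; ring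
    simp_rw [this, hY]
    rw [Finset.sum_add_distrib, Finset.sum_sub_distrib, ← Finset.mul_sum, hsY]
    simp only [Finset.sum_const, Finset.card_univ, nsmul_eq_mul, hcard]
    nlinarith [sq_nonneg μ, pow_pos (by norm_num : (0:ℝ) < 2) d]
  have hnR : (0:ℝ) < n := by exact_mod_cast hn
  have hkey : ∀ ω : Fin n → Fin d → Bool,
      (μ - (∑ i, Y (ω i)) / n) ^ 2 = (∑ i, T (ω i)) ^ 2 / (n:ℝ)^2 := by
    intro ω
    have h1 : ∑ i, T (ω i) = ∑ i, Y (ω i) - n * μ := by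
      simp only [hT, Finset.sum_sub_distrib, Finset.sum_const, Finset.card_univ,
        Fintype.card_fin, nsmul_eq_mul]
    rw [h1]
    field_simp
    ring
  simp_rw [hkey]
  rw [← Finset.sum_div]
  have hsq : ∀ ω : Fin n → Fin d → Bool,
      (∑ i, T (ω i)) ^ 2 = ∑ i, ∑ i', T (ω i) * T (ω i') := by
    intro ω; rw [sq, Finset.sum_mul_sum]
  simp_rw [hsq]
  rw [Finset.sum_comm]
  have hpair : ∀ i : Fin n, (∑ ω : Fin n → Fin d → Bool, ∑ i', T (ω i) * T (ω i'))
      ≤ 2 ^ (d * n) := by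
    intro i
    rw [Finset.sum_comm]
    have hval : ∀ i' : Fin n, (∑ ω : Fin n → Fin d → Bool, T (ω i) * T (ω i'))
        = if i' = i then (∑ z, T z * T z) * ((2:ℝ) ^ d) ^ (n-1) else 0 := by
      intro i'
      by_cases hii : i' = i
      · subst hii
        rw [if_pos rfl, sum_eval_single i' (fun z => T z * T z), hcard]
      · rw [if_neg hii, sum_eval_pair i i' (fun h => hii h.symm) T T, hT0]
        ring
    simp_rw [hval]
    rw [Finset.sum_ite_eq' Finset.univ i (fun _ => (∑ z, T z * T z) * ((2:ℝ) ^ d) ^ (n-1))]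
    simp only [Finset.mem_univ, if_true]
    calc (∑ z, T z * T z) * ((2:ℝ) ^ d) ^ (n-1)
        ≤ 2 ^ d * ((2:ℝ) ^ d) ^ (n-1) := by
          apply mul_le_mul_of_nonneg_right hT2 (by positivity)
      _ = 2 ^ (d * n) := by
          rw [← pow_mul, ← pow_add]
          congr 1
          cases n with
          | zero => omega
          | succ m => simp [Nat.succ_sub_one]; ring
  have htot : ∑ i : Fin n, (∑ ω : Fin n → Fin d → Bool, ∑ i', T (ω i) * T (ω i'))
      ≤ (n:ℝ) * 2 ^ (d * n) := by
    calc ∑ i : Fin n, (∑ ω : Fin n → Fin d → Bool, ∑ i', T (ω i) * T (ω i'))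
        ≤ ∑ _i : Fin n, (2:ℝ) ^ (d * n) := Finset.sum_le_sum fun i _ => hpair i
      _ = (n:ℝ) * 2 ^ (d * n) := by
          rw [Finset.sum_const, Finset.card_univ, Fintype.card_fin, nsmul_eq_mul]
  calc (∑ i : Fin n, ∑ ω : Fin n → Fin d → Bool, ∑ i', T (ω i) * T (ω i')) / (n:ℝ)^2
      ≤ ((n:ℝ) * 2 ^ (d * n)) / (n:ℝ)^2 := by
        apply div_le_div_of_nonneg_right htot (by positivity)
    _ = (2:ℝ) ^ (d * n) / (n:ℝ) := by
        field_simp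

lemma card_deg_eq (d l : ℕ) :
    (Finset.univ.filter fun α : Fin d → Bool =>
      (Finset.univ.filter fun j => α j = true).card = l).card = d.choose l := by
  have h := Finset.card_powersetCard l (Finset.univ : Finset (Fin d))
  rw [Finset.card_univ, Fintype.card_fin] at h
  rw [← h]
  apply Finset.card_bij' (fun α _ => Finset.univ.filter fun j => α j = true)
    (fun s _ => fun j => decide (j ∈ s))
  case hi =>
    intro α hα
    rw [Finset.mem_powersetCard]
    exact ⟨Finset.filter_subset _ _ |>.trans (by simp), (Finset.mem_filter.mp hα).2⟩
  case hj =>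
    intro s hs
    rw [Finset.mem_filter]
    refine ⟨Finset.mem_univ _, ?_⟩
    rw [Finset.mem_powersetCard] at hs
    rw [← hs.2]
    congr 1
    ext j
    simp
  case left_inv =>
    intro α hα
    funext j
    simp
  case right_inv =>
    intro s hs
    ext j
    simp

lemma card_degSet (d k : ℕ) :
    ((Finset.univ.filter fun α : Fin d → Bool =>
        (Finset.univ.filter fun j => α j = true).card ≤ k).card : ℕ)
      = ∑ l ∈ Finset.range (k + 1), d.choose l := by
  rw [Finset.card_eq_sum_card_fiberwise
    (f := fun α : Fin d → Bool => (Finset.univ.filter fun j => α j = true).card)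
    (t := Finset.range (k + 1))
    (fun α hα => Finset.mem_range.mpr (Nat.lt_succ_of_le (Finset.mem_filter.mp hα).2))]
  apply Finset.sum_congr rfl
  intro l hl
  rw [Finset.filter_filter]
  rw [← card_deg_eq d l]
  congr 1
  ext α
  simp only [Finset.mem_filter, Finset.mem_univ, true_and]
  have hlk := Finset.mem_range.mp hl
  constructor
  · exact fun h => h.2
  · exact fun h => ⟨by omega, h⟩

lemma chi_flip (d : ℕ) (j : Fin d) (α x : Fin d → Bool) :
    chi d α (Function.update x j (!x j)) = (if α j = true then (-1:ℝ) else 1) * chi d α x := by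
  rw [chi_def, chi_def]
  rw [← Finset.mul_prod_erase Finset.univ
    (fun j' => if α j' then sgnB (Function.update x j (!x j) j') else 1) (Finset.mem_univ j)]
  rw [← Finset.mul_prod_erase Finset.univ
    (fun j' => if α j' then sgnB (x j') else 1) (Finset.mem_univ j)]
  have hrest : ∏ j' ∈ Finset.univ.erase j,
      (if α j' then sgnB (Function.update x j (!x j) j') else 1)
      = ∏ j' ∈ Finset.univ.erase j, (if α j' then sgnB (x j') else 1) := by
    refine Finset.prod_congr rfl fun j' hj' => ?_
    rw [Function.update_of_ne (Finset.ne_of_mem_erase hj')]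
  rw [hrest]
  simp only [Function.update_self]
  rcases Bool.eq_false_or_eq_true (α j) with h | h <;> cases hx : x j <;>
    simp [h, hx, sgnB] <;> ring

lemma chi_single (d : ℕ) (j : Fin d) (x : Fin d → Bool) :
    chi d (fun i => decide (i = j)) x = sgnB (x j) := by
  rw [chi_def]
  have h : ∀ j' : Fin d, (if (decide (j' = j) : Bool) = true then sgnB (x j') else 1)
      = if j' = j then sgnB (x j') else 1 := by intro j'; simp
  simp_rw [h]
  rw [Finset.prod_ite_eq' Finset.univ j (fun j' => sgnB (x j'))]
  simp

lemma flip_corr (d : ℕ) (j : Fin d) (f : (Fin d → Bool) → ℝ) :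
    ∑ x, f x * f (Function.update x j (!x j))
      = 2 ^ d * ∑ α, fhat d f α * (fhat d f α * (if α j = true then (-1:ℝ) else 1)) := by
  have h : ∀ x, f (Function.update x j (!x j))
      = ∑ β, (fhat d f β * (if β j = true then (-1:ℝ) else 1)) * chi d β x := by
    intro x
    rw [← inversion d f (Function.update x j (!x j))]
    refine Finset.sum_congr rfl fun β _ => ?_
    rw [chi_flip]
    ring
  have h2 : ∀ x, f x * f (Function.update x j (!x j))
      = (∑ α, fhat d f α * chi d α x)
        * (∑ β, (fhat d f β * (if β j = true then (-1:ℝ) else 1)) * chi d β x) := by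
    intro x
    rw [h x]
    congr 1
    exact (inversion d f x).symm
  simp_rw [h2]
  exact parseval_bilin d (fhat d f) (fun β => fhat d f β * (if β j = true then (-1:ℝ) else 1))

lemma parseval_self (d : ℕ) (f : (Fin d → Bool) → ℝ) :
    ∑ x, f x * f x = 2 ^ d * ∑ α, fhat d f α * fhat d f α := by
  have hp := parseval_bilin d (fhat d f) (fhat d f)
  simp_rw [inversion d f] at hp
  exact hp

lemma influence_le (d : ℕ) (f : (Fin d → Bool) → ℝ) (hval : ∀ x, f x = 1 ∨ f x = -1)
    (hmono : ∀ x z : Fin d → Bool, (∀ i, x i ≤ z i) → f x ≤ f z) (j : Fin d) :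
    ∑ α ∈ Finset.univ.filter (fun α : Fin d → Bool => α j = true),
        fhat d f α * fhat d f α
      ≤ fhat d f (fun i => decide (i = j)) := by
  set S := ∑ α ∈ Finset.univ.filter (fun α : Fin d → Bool => α j = true),
      fhat d f α * fhat d f α with hS
  -- identity: ∑_x f x * (f x - f (flip x)) = 2^(d+1) * S
  have hsplit : ∑ α : Fin d → Bool, fhat d f α * (fhat d f α * (if α j = true then (-1:ℝ) else 1))
      = (∑ α, fhat d f α * fhat d f α) - 2 * S := by
    have h1 : ∀ α : Fin d → Bool,
        fhat d f α * (fhat d f α * (if α j = true then (-1:ℝ) else 1))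
        = fhat d f α * fhat d f α
          - 2 * (if α j = true then fhat d f α * fhat d f α else 0) := by
      intro α; by_cases h : α j = true
      · rw [if_pos h, if_pos h]; ring
      · rw [if_neg h, if_neg h]; ring
    simp_rw [h1]
    rw [Finset.sum_sub_distrib, ← Finset.mul_sum, ← Finset.sum_filter]
  have hid : ∑ x, f x * (f x - f (Function.update x j (!x j))) = 2 ^ d * (2 * S) := by
    have := flip_corr d j f
    rw [hsplit] at this
    have hps := parseval_self d f
    simp_rw [mul_sub]
    rw [Finset.sum_sub_distrib, hps, this]
    ring
  -- pairing bound
  have hbound : ∑ x, f x * (f x - f (Function.update x j (!x j)))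
      ≤ 2 * ∑ x, sgnB (x j) * f x := by
    set F : (Fin d → Bool) → ℝ :=
      fun x => f x * (f x - f (Function.update x j (!x j))) - 2 * (sgnB (x j) * f x) with hF
    have hgoal : ∑ x, F x ≤ 0 → ∑ x, f x * (f x - f (Function.update x j (!x j)))
        ≤ 2 * ∑ x, sgnB (x j) * f x := by
      intro h
      have : ∑ x, F x = ∑ x, f x * (f x - f (Function.update x j (!x j)))
          - 2 * ∑ x, sgnB (x j) * f x := by
        simp only [hF, Finset.sum_sub_distrib, ← Finset.mul_sum]
      linarith [this ▸ h]
    apply hgoal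
    rw [← Finset.sum_filter_add_sum_filter_not Finset.univ (fun x => x j = true) F]
    have hbij : ∑ x ∈ Finset.univ.filter (fun x => ¬ x j = true), F x
        = ∑ x ∈ Finset.univ.filter (fun x => x j = true), F (Function.update x j (!x j)) := by
      apply Finset.sum_nbij' (i := fun x => Function.update x j (!x j))
        (j := fun x => Function.update x j (!x j))
      · intro x hx
        simp only [Finset.mem_filter, Finset.mem_univ, true_and, Bool.not_eq_true] at hx ⊢
        simp [hx]
      · intro x hx
        simp only [Finset.mem_filter, Finset.mem_univ, true_and] at hx ⊢
        simp [Function.update_self, hx]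
      · intro x _
        funext i
        by_cases hij : i = j
        · subst hij; simp [Function.update_self]
        · simp [Function.update_of_ne hij]
      · intro x _
        funext i
        by_cases hij : i = j
        · subst hij; simp [Function.update_self]
        · simp [Function.update_of_ne hij]
      · intro x _
        have hss : Function.update (Function.update x j (!x j)) j
            (!(Function.update x j (!x j) j)) = x := by
          funext i
          by_cases hij : i = j
          · subst hij; simp [Function.update_self]
          · simp [Function.update_of_ne hij]
        rw [hss]
    rw [hbij, ← Finset.sum_add_distrib]
    apply Finset.sum_nonpos
    intro x hx
    have hxj : x j = true := (Finset.mem_filter.mp hx).2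
    set y := Function.update x j (!x j) with hy
    have hyj : y j = false := by simp [hy, hxj]
    have hyx : Function.update y j (!y j) = x := by
      funext i
      by_cases hij : i = j
      · subst hij; simp [hy, Function.update_self, hxj]
      · simp [hy, Function.update_of_ne hij]
    have hle : f y ≤ f x := by
      apply hmono
      intro i
      by_cases hij : i = j
      · subst hij; rw [hyj]; exact Bool.false_le _
      · rw [hy, Function.update_of_ne hij]
    have hFx : F x + F y = (f x - f y)^2 - 2 * (f x - f y) := by
      simp only [hF]
      rw [← hy, hyx, hxj, hyj]
      simp [sgnB]
      ring
    rw [hFx]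
    rcases hval x with h1 | h1 <;> rcases hval y with h2 | h2
    · rw [h1, h2]; norm_num
    · rw [h1, h2]; norm_num
    · exfalso; rw [h1, h2] at hle; linarith
    · rw [h1, h2]; norm_num
  -- conclude
  have he : fhat d f (fun i => decide (i = j)) = (∑ x, sgnB (x j) * f x) / 2 ^ d := by
    unfold fhat
    congr 1
    refine Finset.sum_congr rfl fun x _ => ?_
    rw [chi_single]
  rw [he]
  have h2d : (0:ℝ) < 2 ^ d := by positivity
  rw [le_div_iff₀ h2d]
  linarith [hid, hbound]

lemma parseval_one (d : ℕ) (f : (Fin d → Bool) → ℝ) (hval : ∀ x, f x = 1 ∨ f x = -1) :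
    ∑ α : Fin d → Bool, fhat d f α * fhat d f α = 1 := by
  have hps := parseval_self d f
  have h1 : ∀ x : Fin d → Bool, f x * f x = 1 := by
    intro x; rcases hval x with h | h <;> rw [h] <;> norm_num
  simp_rw [h1] at hps
  rw [Finset.sum_const, Finset.card_univ, Fintype.card_fun, Fintype.card_bool,
    Fintype.card_fin, nsmul_eq_mul] at hps
  push_cast at hps
  rw [mul_one] at hps
  have h2d : (0:ℝ) < 2 ^ d := by positivity
  rcases mul_right_eq_self₀.mp hps.symm with h | h
  · exact h
  · exact absurd h (ne_of_gt h2d)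

lemma tail_bound (d k : ℕ) (f : (Fin d → Bool) → ℝ) (hval : ∀ x, f x = 1 ∨ f x = -1)
    (hmono : ∀ x z : Fin d → Bool, (∀ i, x i ≤ z i) → f x ≤ f z) :
    ∑ α ∈ Finset.univ.filter (fun α : Fin d → Bool =>
        ¬ (Finset.univ.filter fun j => α j = true).card ≤ k),
      fhat d f α * fhat d f α ≤ Real.sqrt d / (k + 1) := by
  set T := ∑ j : Fin d, fhat d f (fun i => decide (i = j)) with hT
  have hnn : ∀ α, 0 ≤ fhat d f α * fhat d f α := fun α => mul_self_nonneg _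
  have h1 : ((k:ℝ) + 1) * (∑ α ∈ Finset.univ.filter (fun α : Fin d → Bool =>
      ¬ (Finset.univ.filter fun j => α j = true).card ≤ k), fhat d f α * fhat d f α)
      ≤ ∑ α : Fin d → Bool,
          ((Finset.univ.filter fun j => α j = true).card : ℝ) * (fhat d f α * fhat d f α) := by
    rw [Finset.mul_sum]
    calc ∑ α ∈ Finset.univ.filter (fun α : Fin d → Bool =>
            ¬ (Finset.univ.filter fun j => α j = true).card ≤ k),
          ((k:ℝ) + 1) * (fhat d f α * fhat d f α)
        ≤ ∑ α ∈ Finset.univ.filter (fun α : Fin d → Bool =>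
            ¬ (Finset.univ.filter fun j => α j = true).card ≤ k),
          ((Finset.univ.filter fun j => α j = true).card : ℝ) * (fhat d f α * fhat d f α) := by
          apply Finset.sum_le_sum
          intro α hα
          have hdeg : k + 1 ≤ (Finset.univ.filter fun j => α j = true).card := by
            have := (Finset.mem_filter.mp hα).2
            omega
          apply mul_le_mul_of_nonneg_right _ (hnn α)
          exact_mod_cast hdeg
      _ ≤ ∑ α : Fin d → Bool,
          ((Finset.univ.filter fun j => α j = true).card : ℝ) * (fhat d f α * fhat d f α) := by
          apply Finset.sum_le_sum_of_subset_of_nonneg (Finset.filter_subset _ _)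
          intro α _ _
          exact mul_nonneg (by positivity) (hnn α)
  have h2 : ∑ α : Fin d → Bool,
      ((Finset.univ.filter fun j => α j = true).card : ℝ) * (fhat d f α * fhat d f α) ≤ T := by
    have hcf : ∀ α : Fin d → Bool, ((Finset.univ.filter fun j => α j = true).card : ℝ)
        = ∑ j : Fin d, (if α j = true then (1:ℝ) else 0) := by
      intro α
      rw [Finset.card_filter]
      push_cast
      rfl
    simp_rw [hcf, Finset.sum_mul]
    rw [Finset.sum_comm]
    rw [hT]
    apply Finset.sum_le_sum
    intro j _
    have : ∀ α : Fin d → Bool, (if α j = true then (1:ℝ) else 0) * (fhat d f α * fhat d f α)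
        = if α j = true then fhat d f α * fhat d f α else 0 := by
      intro α; split <;> ring
    simp_rw [this]
    rw [← Finset.sum_filter]
    exact influence_le d f hval hmono j
  have hP := parseval_one d f hval
  have hinj' : ∀ x ∈ (Finset.univ : Finset (Fin d)), ∀ y ∈ Finset.univ,
      (fun i => decide (i = x) : Fin d → Bool) = (fun i => decide (i = y)) → x = y := by
    intro a _ b _ hab
    have := congrFun hab a
    simpa using this
  have h3 : ∑ j : Fin d,
      fhat d f (fun i => decide (i = j)) * fhat d f (fun i => decide (i = j)) ≤ 1 := by
    have himg := Finset.sum_image (f := fun α => fhat d f α * fhat d f α)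
      (g := fun j : Fin d => (fun i => decide (i = j) : Fin d → Bool)) (s := Finset.univ) hinj'
    rw [← himg, ← hP]
    exact Finset.sum_le_sum_of_subset_of_nonneg (Finset.subset_univ _) (fun α _ _ => hnn α)
  have hCS : T ≤ Real.sqrt d := by
    have hsq := sq_sum_le_card_mul_sum_sq (s := (Finset.univ : Finset (Fin d)))
      (f := fun j => fhat d f (fun i => decide (i = j)))
    rw [Finset.card_univ, Fintype.card_fin] at hsq
    have h3' : ∑ j : Fin d, (fhat d f (fun i => decide (i = j)))^2 ≤ 1 := by
      calc ∑ j : Fin d, (fhat d f (fun i => decide (i = j)))^2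
          = ∑ j : Fin d, fhat d f (fun i => decide (i = j)) * fhat d f (fun i => decide (i = j)) := by
            refine Finset.sum_congr rfl fun j _ => sq (fhat d f (fun i => decide (i = j))) ▸ rfl
        _ ≤ 1 := h3
    calc T ≤ |T| := le_abs_self T
      _ = Real.sqrt (T^2) := (Real.sqrt_sq_eq_abs T).symm
      _ ≤ Real.sqrt ((d:ℝ) * 1) := by
          apply Real.sqrt_le_sqrt
          calc T^2 ≤ (d:ℝ) * ∑ j : Fin d, (fhat d f (fun i => decide (i = j)))^2 := hsq
            _ ≤ (d:ℝ) * 1 := by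
                apply mul_le_mul_of_nonneg_left h3' (by positivity)
      _ = Real.sqrt d := by rw [mul_one]
  have hk1 : (0:ℝ) < (k:ℝ) + 1 := by positivity
  rw [le_div_iff₀ hk1]
  linarith [h1, h2, hCS]

lemma binom_sum_le_exp (d k : ℕ) (hk1 : 1 ≤ k) (hkd : k ≤ d) :
    ∑ l ∈ Finset.range (k + 1), (d.choose l : ℝ)
      ≤ Real.exp (k * (1 + Real.log ((d : ℝ) / k))) := by
  have hd0 : (0:ℝ) < d := by
    have : 1 ≤ d := le_trans hk1 hkd
    exact_mod_cast Nat.lt_of_lt_of_le Nat.zero_lt_one this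
  have hk0 : (0:ℝ) < k := by exact_mod_cast hk1
  set r : ℝ := (k : ℝ) / d with hr
  have hr0 : 0 < r := div_pos hk0 hd0
  have hdk1 : 1 ≤ (d:ℝ) / k := (one_le_div hk0).mpr (by exact_mod_cast hkd)
  have hdk0 : 0 < (d:ℝ) / k := lt_of_lt_of_le one_pos hdk1
  -- step i
  have step1 : ∑ l ∈ Finset.range (k + 1), (d.choose l : ℝ)
      ≤ (∑ l ∈ Finset.range (k + 1), (d.choose l : ℝ) * r ^ l) * ((d:ℝ)/k) ^ k := by
    rw [Finset.sum_mul]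
    apply Finset.sum_le_sum
    intro l hl
    have hlk : l ≤ k := Nat.lt_succ_iff.mp (Finset.mem_range.mp hl)
    have hsplit : ((d:ℝ)/k) ^ k = ((d:ℝ)/k) ^ l * ((d:ℝ)/k) ^ (k - l) := by
      rw [← pow_add]
      congr 1
      omega
    have hrl : r ^ l * ((d:ℝ)/k) ^ l = 1 := by
      rw [← mul_pow, hr]
      rw [div_mul_div_comm]
      rw [mul_comm ((k:ℝ)) ((d:ℝ))]
      rw [div_self (by positivity)]
      exact one_pow l
    calc (d.choose l : ℝ) = (d.choose l : ℝ) * 1 * 1 := by ring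
      _ ≤ (d.choose l : ℝ) * 1 * ((d:ℝ)/k) ^ (k - l) := by
          apply mul_le_mul_of_nonneg_left (one_le_pow₀ hdk1) (by positivity)
      _ = (d.choose l : ℝ) * (r ^ l * ((d:ℝ)/k) ^ l) * ((d:ℝ)/k) ^ (k - l) := by rw [hrl]
      _ = (d.choose l : ℝ) * r ^ l * (((d:ℝ)/k) ^ l * ((d:ℝ)/k) ^ (k - l)) := by ring
      _ = (d.choose l : ℝ) * r ^ l * ((d:ℝ)/k) ^ k := by rw [← hsplit]
  -- step ii: binomial theorem
  have step2 : ∑ l ∈ Finset.range (k + 1), (d.choose l : ℝ) * r ^ l ≤ (1 + r) ^ d := by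
    have hbin : (r + 1) ^ d = ∑ l ∈ Finset.range (d + 1), r ^ l * 1 ^ (d - l) * (d.choose l : ℝ) :=
      add_pow r 1 d
    have : ∑ l ∈ Finset.range (k + 1), (d.choose l : ℝ) * r ^ l
        ≤ ∑ l ∈ Finset.range (d + 1), (d.choose l : ℝ) * r ^ l := by
      apply Finset.sum_le_sum_of_subset_of_nonneg
      · exact Finset.range_subset_range.mpr (by omega)
      · intro l _ _; positivity
    refine this.trans ?_
    rw [show (1 + r) ^ d = (r + 1) ^ d by ring_nf, hbin]
    apply le_of_eq
    refine Finset.sum_congr rfl fun l _ => ?_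
    rw [one_pow]
    ring
  -- step iii
  have step3 : (1 + r) ^ d ≤ Real.exp k := by
    have h1 : (1 + r) ≤ Real.exp r := by
      have := Real.add_one_le_exp r
      linarith
    calc (1 + r) ^ d ≤ (Real.exp r) ^ d := by
          apply pow_le_pow_left₀ (by positivity) h1
      _ = Real.exp (r * d) := by
          rw [← Real.exp_nat_mul]
          congr 1
          ring
      _ = Real.exp k := by
          congr 1
          rw [hr]
          field_simp
  -- step iv
  have step4 : Real.exp (k * (1 + Real.log ((d : ℝ) / k)))
      = Real.exp k * ((d:ℝ)/k) ^ k := by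
    rw [mul_add, mul_one, Real.exp_add]
    congr 1
    rw [← Real.log_pow]
    exact Real.exp_log (by positivity)
  rw [step4]
  calc ∑ l ∈ Finset.range (k + 1), (d.choose l : ℝ)
      ≤ (∑ l ∈ Finset.range (k + 1), (d.choose l : ℝ) * r ^ l) * ((d:ℝ)/k) ^ k := step1
    _ ≤ (1 + r) ^ d * ((d:ℝ)/k) ^ k := by
        apply mul_le_mul_of_nonneg_right step2 (by positivity)
    _ ≤ Real.exp k * ((d:ℝ)/k) ^ k := by
        apply mul_le_mul_of_nonneg_right step3 (by positivity)

theorem stmt15 (d : ℕ) (hd : 1 ≤ d) (k : ℕ) (hk1 : 1 ≤ k) (hkd : k ≤ d)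
    (n : ℕ) (hn : 1 ≤ n) (f : (Fin d → Bool) → ℝ)
    (hval : ∀ x, f x = 1 ∨ f x = -1)
    (hmono : ∀ x z : Fin d → Bool, (∀ j, x j ≤ z j) → f x ≤ f z) :
    booleanMCError d k n f ≤ Real.sqrt d / (k + 1) +
        (∑ l ∈ Finset.range (k + 1), (d.choose l : ℝ)) / n ∧
    booleanMCError d k n f ≤ Real.sqrt d / (k + 1) +
        Real.exp (k * (1 + Real.log ((d : ℝ) / k))) / n := by
  have hn0 : (0:ℝ) < n := by exact_mod_cast hn
  have h2d : (0:ℝ) < 2 ^ d := by positivity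
  have h2dn : (0:ℝ) < 2 ^ (d * n) := by positivity
  set A : Finset (Fin d → Bool) := Finset.univ.filter
    (fun α : Fin d → Bool => (Finset.univ.filter fun j => α j = true).card ≤ k) with hA
  set b : (Fin n → Fin d → Bool) → (Fin d → Bool) → ℝ :=
    fun ω α => (∑ i, chi d α (ω i) * f (ω i)) / n with hb
  set c : (Fin n → Fin d → Bool) → (Fin d → Bool) → ℝ :=
    fun ω α => fhat d f α - (if α ∈ A then b ω α else 0) with hc
  set g : (Fin n → Fin d → Bool) → (Fin d → Bool) → ℝ :=
    fun ω x => ∑ α ∈ A, b ω α * chi d α x with hg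
  -- rewrite booleanMCError
  have hBM : booleanMCError d k n f
      = (∑ ω : Fin n → Fin d → Bool,
          ((Finset.univ.filter fun x : Fin d → Bool => f x ≠ msign (g ω x)).card : ℝ) / 2 ^ d)
        / 2 ^ (d * n) := by
    unfold booleanMCError
    rfl
  -- step 1: pointwise error bound
  have step1 : ∀ ω : Fin n → Fin d → Bool,
      ((Finset.univ.filter fun x : Fin d → Bool => f x ≠ msign (g ω x)).card : ℝ)
      ≤ ∑ x : Fin d → Bool, (f x - g ω x) * (f x - g ω x) := by
    intro ω
    have hpt : ∀ x ∈ Finset.univ.filter (fun x : Fin d → Bool => f x ≠ msign (g ω x)),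
        (1:ℝ) ≤ (f x - g ω x) * (f x - g ω x) := by
      intro x hx
      have hne : f x ≠ msign (g ω x) := (Finset.mem_filter.mp hx).2
      rcases hval x with h1 | h1
      · have hlt : g ω x < 0 := by
          by_contra hge
          push_neg at hge
          exact hne (by rw [h1, msign, if_pos hge])
        rw [h1]; nlinarith
      · by_cases hge : 0 ≤ g ω x
        · rw [h1]; nlinarith
        · exact absurd (by rw [h1, msign, if_neg hge] : f x = msign (g ω x)) hne
    calc ((Finset.univ.filter fun x : Fin d → Bool => f x ≠ msign (g ω x)).card : ℝ)
        = ∑ _x ∈ Finset.univ.filter (fun x : Fin d → Bool => f x ≠ msign (g ω x)), (1:ℝ) := by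
          rw [Finset.sum_const, nsmul_eq_mul, mul_one]
      _ ≤ ∑ x ∈ Finset.univ.filter (fun x : Fin d → Bool => f x ≠ msign (g ω x)),
            (f x - g ω x) * (f x - g ω x) := Finset.sum_le_sum hpt
      _ ≤ ∑ x : Fin d → Bool, (f x - g ω x) * (f x - g ω x) :=
          Finset.sum_le_sum_of_subset_of_nonneg (Finset.filter_subset _ _)
            (fun x _ _ => mul_self_nonneg _)
  -- step 2: Parseval
  have hdecomp : ∀ (ω : Fin n → Fin d → Bool) (x : Fin d → Bool),
      f x - g ω x = ∑ α, c ω α * chi d α x := by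
    intro ω x
    have h1 : ∑ α : Fin d → Bool, (if α ∈ A then b ω α else 0) * chi d α x = g ω x := by
      simp_rw [ite_mul, zero_mul]
      rw [Finset.sum_ite_mem, Finset.univ_inter]
    calc f x - g ω x
        = (∑ α, fhat d f α * chi d α x)
          - ∑ α : Fin d → Bool, (if α ∈ A then b ω α else 0) * chi d α x := by
          rw [inversion d f x, h1]
      _ = ∑ α, (fhat d f α - (if α ∈ A then b ω α else 0)) * chi d α x := by
          rw [← Finset.sum_sub_distrib]
          exact Finset.sum_congr rfl fun α _ => (sub_mul _ _ _).symm
      _ = ∑ α, c ω α * chi d α x := rfl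
  have step2 : ∀ ω : Fin n → Fin d → Bool,
      ∑ x : Fin d → Bool, (f x - g ω x) * (f x - g ω x)
        = 2 ^ d * ∑ α, c ω α * c ω α := by
    intro ω
    simp_rw [hdecomp ω]
    exact parseval_bilin d (c ω) (c ω)
  -- step 3: expectation over samples
  have step3 : ∀ α : Fin d → Bool, (∑ ω : Fin n → Fin d → Bool, c ω α * c ω α)
      ≤ (if α ∈ A then (2:ℝ)^(d*n) / n else 2^(d*n) * (fhat d f α * fhat d f α)) := by
    intro α
    by_cases hαA : α ∈ A
    · rw [if_pos hαA]
      have hY : ∀ z, ((fun z => chi d α z * f z) z) * ((fun z => chi d α z * f z) z) = 1 := by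
        intro z
        have hx1 : chi d α z * chi d α z = 1 := chi_mul_self d α z
        have hx2 : f z * f z = 1 := by rcases hval z with h | h <;> rw [h] <;> norm_num
        calc (chi d α z * f z) * (chi d α z * f z)
            = (chi d α z * chi d α z) * (f z * f z) := by ring
          _ = 1 := by rw [hx1, hx2, mul_one]
      have hv := sample_var d n hn (fun z => chi d α z * f z) hY
      refine le_trans (le_of_eq ?_) hv
      refine Finset.sum_congr rfl fun ω _ => ?_
      simp only [hc, hb, fhat, if_pos hαA]
      ring
    · rw [if_neg hαA]
      have hcc : ∀ ω : Fin n → Fin d → Bool, c ω α * c ω α = fhat d f α * fhat d f α := by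
        intro ω; simp only [hc, if_neg hαA]; ring
      simp_rw [hcc]
      rw [Finset.sum_const, Finset.card_univ, nsmul_eq_mul]
      apply le_of_eq
      congr 1
      rw [Fintype.card_fun, Fintype.card_fun, Fintype.card_bool, Fintype.card_fin,
        Fintype.card_fin]
      push_cast
      rw [← pow_mul]
  -- combine
  have hcard : (A.card : ℝ) = ∑ l ∈ Finset.range (k+1), (d.choose l : ℝ) := by
    rw [hA]
    exact_mod_cast congrArg (Nat.cast : ℕ → ℝ) (card_degSet d k)
  have htail := tail_bound d k f hval hmono
  set tailsum := ∑ α ∈ Finset.univ.filter (fun α : Fin d → Bool =>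
      ¬ (Finset.univ.filter fun j => α j = true).card ≤ k), fhat d f α * fhat d f α with hts
  have main : booleanMCError d k n f
      ≤ Real.sqrt d / (k + 1) + (∑ l ∈ Finset.range (k + 1), (d.choose l : ℝ)) / n := by
    rw [hBM]
    have hω : ∀ ω : Fin n → Fin d → Bool,
        ((Finset.univ.filter fun x : Fin d → Bool => f x ≠ msign (g ω x)).card : ℝ) / 2 ^ d
        ≤ ∑ α, c ω α * c ω α := by
      intro ω
      rw [div_le_iff₀ h2d]
      calc ((Finset.univ.filter fun x : Fin d → Bool => f x ≠ msign (g ω x)).card : ℝ)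
          ≤ ∑ x : Fin d → Bool, (f x - g ω x) * (f x - g ω x) := step1 ω
        _ = 2 ^ d * ∑ α, c ω α * c ω α := step2 ω
        _ = (∑ α, c ω α * c ω α) * 2 ^ d := by ring
    calc (∑ ω : Fin n → Fin d → Bool,
          ((Finset.univ.filter fun x : Fin d → Bool => f x ≠ msign (g ω x)).card : ℝ) / 2 ^ d)
          / 2 ^ (d * n)
        ≤ (∑ ω : Fin n → Fin d → Bool, ∑ α, c ω α * c ω α) / 2 ^ (d * n) := by
          apply div_le_div_of_nonneg_right (Finset.sum_le_sum fun ω _ => hω ω) h2dn.le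
      _ = (∑ α : Fin d → Bool, ∑ ω : Fin n → Fin d → Bool, c ω α * c ω α) / 2 ^ (d * n) := by
          rw [Finset.sum_comm]
      _ ≤ (∑ α : Fin d → Bool, if α ∈ A then (2:ℝ)^(d*n) / n
            else 2^(d*n) * (fhat d f α * fhat d f α)) / 2 ^ (d * n) := by
          apply div_le_div_of_nonneg_right (Finset.sum_le_sum fun α _ => step3 α) h2dn.le
      _ = ((A.card : ℝ) * ((2:ℝ)^(d*n) / n) + 2^(d*n) * tailsum) / 2 ^ (d * n) := by
          congr 1
          rw [Finset.sum_ite]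
          congr 1
          · rw [Finset.sum_const, nsmul_eq_mul]
            congr 2
            rw [Finset.filter_mem_eq_inter, Finset.univ_inter]
          · rw [hts, Finset.mul_sum]
            rw [Finset.sum_filter, Finset.sum_filter]
            refine Finset.sum_congr rfl fun α _ => ?_
            by_cases hm : (Finset.univ.filter fun j => α j = true).card ≤ k
            · have hmem : α ∈ A := by rw [hA]; simp [hm]
              simp [hm, hmem]
            · have hmem : α ∉ A := by rw [hA]; simp [hm]
              simp [hm, hmem]
      _ = (A.card : ℝ) / n + tailsum := by
          field_simp
      _ ≤ Real.sqrt d / (k + 1) + (∑ l ∈ Finset.range (k + 1), (d.choose l : ℝ)) / n := by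
          rw [hcard, add_comm]
          have h2 : tailsum ≤ Real.sqrt d / (k + 1) := htail
          gcongr
  refine ⟨main, le_trans main ?_⟩
  gcongr
  exact binom_sum_le_exp d k hk1 hkd
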